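/- The integral equation v(ξ,η) = −(1/2)∫_{ξ/2}^{η/2} q(s) ds − (1/4)∫₀^ξ∫_ξ^η q((η₁−ξ₁)/2) v(ξ₁,η₁) dη₁ dξ₁ has a unique continuous solution v on the triangle {(ξ,η) : 0 ≤ ξ ≤ η ≤ T} for every T > 0. -/

import Mathlib

open MeasureTheory Set

abbrev MatC (n : ℕ) := EuclideanSpace ℂ (Fin n) →L[ℂ] EuclideanSpace ℂ (Fin n)

noncomputable def v0fun (n : ℕ) (q : ℝ → MatC n) (ξ η : ℝ) : MatC n :=
  -((1 / 2 : ℂ) • ∫ s in (ξ / 2)..(η / 2), q s)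

noncomputable def Vop (n : ℕ) (q : ℝ → MatC n) (v : ℝ → ℝ → MatC n) :
    ℝ → ℝ → MatC n :=
  fun ξ η => -((1 / 4 : ℂ) • ∫ ξ₁ in (0:ℝ)..ξ, ∫ η₁ in ξ..η, q ((η₁ - ξ₁) / 2) * v ξ₁ η₁)

/-! Replacing `q` by a strongly measurable integrable function that agrees with it a.e. on
`[0, T]` changes neither side of the equation on the triangle. The map `v ↦ v₀ + V v` then sends
continuous functions on the compact triangle to continuous functions, `V v` being a difference of
iterated primitives of a kernel dominated by translates of an integrable function. If
`‖v - v'‖ ≤ κ exp (L ξ)` on the triangle with `L > ∫ ‖q (t / 2)‖ dt`, integrating the kernel gives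
`‖V v - V v'‖ ≤ (κ / 4) exp (L ξ)`; so the `k`-th iterate of the map is Lipschitz with constant
`exp (L T) / 4 ^ k`, a power of it is a contraction, and the Banach fixed-point theorem applies. -/

open Filter Function intervalIntegral
open scoped NNReal Topology Interval BoundedContinuousFunction

theorem existsUnique_isFixedPt_of_dist_iterate_le {X : Type*} [MetricSpace X] [CompleteSpace X]
    [Nonempty X] {f : X → X} {C r : ℝ} (hr₀ : 0 ≤ r) (hr : r < 1)
    (hf : ∀ k x y, dist (f^[k] x) (f^[k] y) ≤ C * r ^ k * dist x y) :
    ∃! x, IsFixedPt f x := by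
  have hlim : Tendsto (fun k => C * r ^ k) atTop (𝓝 0) := by
    simpa using (tendsto_pow_atTop_nhds_zero_of_lt_one hr₀ hr).const_mul C
  obtain ⟨N, hN⟩ := (hlim.eventually (gt_mem_nhds (by norm_num : (0 : ℝ) < 1 / 2))).exists
  have hcontr : ContractingWith (1 / 2) f^[N] := by
    refine ⟨by norm_num, LipschitzWith.of_dist_le_mul fun x y => ?_⟩
    calc dist (f^[N] x) (f^[N] y) ≤ C * r ^ N * dist x y := hf N x y
      _ ≤ (1 / 2 : ℝ≥0) * dist x y := by
        push_cast
        exact mul_le_mul_of_nonneg_right hN.le dist_nonneg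
  refine ⟨_, hcontr.isFixedPt_fixedPoint_iterate, fun y hy => ?_⟩
  exact hcontr.fixedPoint_unique (hy.iterate N)

section Kernel

variable {E : Type*} [NormedAddCommGroup E]

structure IsDominatedKernel (F : ℝ → ℝ → E) (g : ℝ → ℝ) : Prop where
  stronglyMeasurable : StronglyMeasurable (uncurry F)
  integrable : Integrable g
  norm_le : ∀ c s, ‖F c s‖ ≤ g (s - c)

theorem IsDominatedKernel.nonneg {F : ℝ → ℝ → E} {g : ℝ → ℝ} (hF : IsDominatedKernel F g)
    (t : ℝ) : 0 ≤ g t := by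
  simpa using (norm_nonneg _).trans (hF.norm_le 0 t)

theorem IsDominatedKernel.integrable_apply {F : ℝ → ℝ → E} {g : ℝ → ℝ}
    (hF : IsDominatedKernel F g) (c : ℝ) : Integrable (F c) :=
  (hF.integrable.comp_sub_right c).mono'
    (hF.stronglyMeasurable.comp_measurable measurable_prodMk_left).aestronglyMeasurable
    (Eventually.of_forall (hF.norm_le c))

variable [NormedSpace ℝ E]

theorem norm_intervalIntegral_le_integral_of_norm_le {f : ℝ → E} {g : ℝ → ℝ} {a b : ℝ}
    (hg : Integrable g) (hg₀ : ∀ s, 0 ≤ g s) (hfg : ∀ s ∈ Ι a b, ‖f s‖ ≤ g s) :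
    ‖∫ s in a..b, f s‖ ≤ ∫ s, g s :=
  calc ‖∫ s in a..b, f s‖ = ‖∫ s in Ι a b, f s‖ := norm_integral_eq_norm_integral_uIoc f
    _ ≤ ∫ s in Ι a b, g s :=
        norm_integral_le_of_norm_le hg.integrableOn
          ((ae_restrict_iff' measurableSet_uIoc).2 (Eventually.of_forall hfg))
    _ ≤ ∫ s, g s := setIntegral_le_integral hg (Eventually.of_forall hg₀)

namespace IsDominatedKernel

variable {F : ℝ → ℝ → E} {g : ℝ → ℝ}

theorem norm_intervalIntegral_le (hF : IsDominatedKernel F g) (c a b : ℝ) :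
    ‖∫ s in a..b, F c s‖ ≤ ∫ t, g t := by
  rw [← integral_sub_right_eq_self g c]
  exact norm_intervalIntegral_le_integral_of_norm_le (hF.integrable.comp_sub_right c)
    (fun s => hF.nonneg (s - c)) fun s _ => hF.norm_le c s

theorem stronglyMeasurable_intervalIntegral (hF : IsDominatedKernel F g) (a b : ℝ) :
    StronglyMeasurable fun c => ∫ s in a..b, F c s :=
  (hF.stronglyMeasurable.integral_prod_right (ν := volume.restrict (Ioc a b))).sub
    (hF.stronglyMeasurable.integral_prod_right (ν := volume.restrict (Ioc b a)))

theorem intervalIntegrable_intervalIntegral (hF : IsDominatedKernel F g) (a b a' b' : ℝ) :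
    IntervalIntegrable (fun c => ∫ s in a..b, F c s) volume a' b' :=
  (intervalIntegrable_const (c := ∫ t, g t)).mono_fun'
    (hF.stronglyMeasurable_intervalIntegral a b).aestronglyMeasurable
    (Eventually.of_forall fun c => hF.norm_intervalIntegral_le c a b)

theorem continuous_primitive_primitive [CompleteSpace E] (hF : IsDominatedKernel F g) :
    Continuous fun p : ℝ × ℝ => ∫ c in 0..p.1, ∫ s in 0..p.2, F c s := by
  suffices Continuous fun p : ℝ × ℝ => ∫ c in 0..p.2, ∫ s in 0..p.1, F c s from
    this.comp continuous_swap
  refine continuous_iff_continuousAt.2 fun ⟨y₀, x₀⟩ => ?_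
  have hx₀ : x₀ ∈ Ioo (-(|x₀| + 1)) (|x₀| + 1) := by
    constructor <;> linarith [neg_abs_le x₀, le_abs_self x₀]
  have h₀ : (0 : ℝ) ∈ Ioo (-(|x₀| + 1)) (|x₀| + 1) := by
    constructor <;> linarith [abs_nonneg x₀]
  exact continuousAt_parametric_primitive_of_dominated (fun _ => ∫ t, g t) _ _
    (fun y => (hF.stronglyMeasurable_intervalIntegral 0 y).aestronglyMeasurable)
    (Eventually.of_forall fun y => Eventually.of_forall fun c =>
      hF.norm_intervalIntegral_le c 0 y)
    intervalIntegrable_const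
    (Eventually.of_forall fun c => ((hF.integrable_apply c).continuous_primitive 0).continuousAt)
    h₀ hx₀ Real.volume_singleton

theorem continuous_integral_integral [CompleteSpace E] (hF : IsDominatedKernel F g) :
    Continuous fun p : ℝ × ℝ => ∫ c in 0..p.1, ∫ s in p.1..p.2, F c s := by
  have hsplit : ∀ ξ η, (∫ c in 0..ξ, ∫ s in ξ..η, F c s) =
      (∫ c in 0..ξ, ∫ s in 0..η, F c s) - ∫ c in 0..ξ, ∫ s in 0..ξ, F c s := fun ξ η => by
    rw [← integral_sub (hF.intervalIntegrable_intervalIntegral _ _ _ _)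
      (hF.intervalIntegrable_intervalIntegral _ _ _ _)]
    refine integral_congr fun c _ => ?_
    exact (integral_interval_sub_left (hF.integrable_apply c).intervalIntegrable
      (hF.integrable_apply c).intervalIntegrable).symm
  simp_rw [hsplit]
  have hG := hF.continuous_primitive_primitive
  exact hG.sub (hG.comp (continuous_fst.prodMk continuous_fst))

end IsDominatedKernel

end Kernel

section Triangle

def triangle (T : ℝ) : Set (ℝ × ℝ) := {p | 0 ≤ p.1 ∧ p.1 ≤ p.2 ∧ p.2 ≤ T}

theorem isCompact_triangle (T : ℝ) : IsCompact (triangle T) := by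
  refine (isCompact_Icc (a := ((0 : ℝ), (0 : ℝ))) (b := (T, T))).of_isClosed_subset ?_ ?_
  · exact (isClosed_le continuous_const continuous_fst).inter
      ((isClosed_le continuous_fst continuous_snd).inter
        (isClosed_le continuous_snd continuous_const))
  · rintro p ⟨h₁, h₂, h₃⟩
    exact ⟨⟨h₁, h₁.trans h₂⟩, h₂.trans h₃, h₃⟩

instance (T : ℝ) : CompactSpace (triangle T) :=
  isCompact_iff_compactSpace.1 (isCompact_triangle T)

variable {T : ℝ}

def triangleRetraction (hT : 0 ≤ T) : C(ℝ × ℝ, triangle T) where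
  toFun p := ⟨(min (max p.1 0) T, min (max p.2 (min (max p.1 0) T)) T),
    le_min (le_max_right _ _) hT, le_min (le_max_right _ _) (min_le_right _ _), min_le_right _ _⟩
  continuous_toFun := by fun_prop

theorem triangleRetraction_of_mem (hT : 0 ≤ T) {p : ℝ × ℝ} (hp : p ∈ triangle T) :
    (triangleRetraction hT p : ℝ × ℝ) = p := by
  obtain ⟨h₁, h₂, h₃⟩ := hp
  simp [triangleRetraction, max_eq_left h₁, min_eq_left (h₂.trans h₃), max_eq_left h₂,
    min_eq_left h₃]

def restrictToTriangle {E : Type*} [TopologicalSpace E] {v : ℝ → ℝ → E}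
    (hv : ContinuousOn (fun p : ℝ × ℝ => v p.1 p.2) (triangle T)) : C(triangle T, E) :=
  ⟨fun p => v p.1.1 p.1.2, hv.domRestrict⟩

variable {E : Type*} [NormedAddCommGroup E]

def extendFromTriangle (hT : 0 ≤ T) (u : C(triangle T, E)) : ℝ × ℝ →ᵇ E :=
  (BoundedContinuousFunction.mkOfCompact u).compContinuous (triangleRetraction hT)

theorem extendFromTriangle_of_mem (hT : 0 ≤ T) (u : C(triangle T, E)) {p : ℝ × ℝ}
    (hp : p ∈ triangle T) :
    extendFromTriangle hT u p = u ⟨p, hp⟩ :=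
  congrArg u (Subtype.ext (triangleRetraction_of_mem hT hp))

theorem extendFromTriangle_sub (hT : 0 ≤ T) (u u' : C(triangle T, E)) :
    extendFromTriangle hT (u - u') = extendFromTriangle hT u - extendFromTriangle hT u' :=
  rfl

end Triangle

theorem isDominatedKernel_goursat {A : Type*} [NormedRing A] {Q : ℝ → A}
    (hQm : StronglyMeasurable Q) (hQi : Integrable Q) (w : ℝ × ℝ →ᵇ A) :
    IsDominatedKernel (fun c s => Q ((s - c) / 2) * w (c, s)) fun t => ‖w‖ * ‖Q (t / 2)‖ where
  stronglyMeasurable :=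
    (hQm.comp_measurable ((measurable_snd.sub measurable_fst).div_const 2)).mul
      w.continuous.stronglyMeasurable
  integrable := (hQi.comp_div two_ne_zero).norm.const_mul _
  norm_le c s := (norm_mul_le _ _).trans <| by
    rw [mul_comm]; exact mul_le_mul_of_nonneg_right (w.norm_coe_le_norm _) (norm_nonneg _)

theorem integral_exp_mul_le_div {L ξ : ℝ} (hL : 0 < L) :
    ∫ c in 0..ξ, Real.exp (L * c) ≤ Real.exp (L * ξ) / L := by
  rw [integral_comp_mul_left (fun x => Real.exp x) hL.ne', mul_zero, integral_exp, smul_eq_mul,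
    inv_mul_eq_div]
  gcongr
  linarith [Real.exp_pos 0]

section Goursat

variable {n : ℕ} {Q : ℝ → MatC n} {T : ℝ}

theorem continuous_v0fun (hQ : LocallyIntegrable Q) :
    Continuous fun p : ℝ × ℝ => v0fun n Q p.1 p.2 := by
  have hQab : ∀ a b, IntervalIntegrable Q volume a b := fun a b =>
    intervalIntegrable_iff.2 ((hQ.integrableOn_isCompact isCompact_uIcc).mono_set uIoc_subset_uIcc)
  have hP := continuous_primitive hQab 0
  refine (((hP.comp (continuous_snd.div_const 2)).sub
    (hP.comp (continuous_fst.div_const 2))).const_smul (1 / 2 : ℂ)).neg.congr fun p => ?_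
  simp only [v0fun, comp_apply, integral_interval_sub_left (hQab 0 _) (hQab 0 _), Pi.neg_apply,
    Pi.smul_apply, Pi.sub_apply]

theorem continuous_Vop (hQm : StronglyMeasurable Q) (hQi : Integrable Q) (w : ℝ × ℝ →ᵇ MatC n) :
    Continuous fun p : ℝ × ℝ => Vop n Q (curry w) p.1 p.2 :=
  ((isDominatedKernel_goursat hQm hQi w).continuous_integral_integral.const_smul
    (1 / 4 : ℂ)).neg.congr fun _ => rfl

theorem Vop_sub (hQm : StronglyMeasurable Q) (hQi : Integrable Q) (w₁ w₂ : ℝ × ℝ →ᵇ MatC n)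
    (ξ η : ℝ) :
    Vop n Q (curry ⇑(w₁ - w₂)) ξ η = Vop n Q (curry w₁) ξ η - Vop n Q (curry w₂) ξ η := by
  have h₁ := isDominatedKernel_goursat hQm hQi w₁
  have h₂ := isDominatedKernel_goursat hQm hQi w₂
  have hinner : ∀ c, (∫ s in ξ..η, Q ((s - c) / 2) * (w₁ - w₂) (c, s)) =
      (∫ s in ξ..η, Q ((s - c) / 2) * w₁ (c, s)) - ∫ s in ξ..η, Q ((s - c) / 2) * w₂ (c, s) :=
    fun c => by
      simp only [BoundedContinuousFunction.coe_sub, Pi.sub_apply, mul_sub]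
      exact integral_sub (h₁.integrable_apply c).intervalIntegrable
        (h₂.integrable_apply c).intervalIntegrable
  simp only [Vop, curry_apply, hinner]
  rw [integral_sub (h₁.intervalIntegrable_intervalIntegral _ _ _ _)
    (h₂.intervalIntegrable_intervalIntegral _ _ _ _), smul_sub, neg_sub, neg_sub_neg]

theorem norm_Vop_le_mul_exp (hQi : Integrable Q) {w : ℝ → ℝ → MatC n} {κ L ξ η : ℝ}
    (hL : ∫ t, ‖Q (t / 2)‖ < L) (hκ : 0 ≤ κ)
    (hw : ∀ a b, (a, b) ∈ triangle T → ‖w a b‖ ≤ κ * Real.exp (L * a))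
    (hp : (ξ, η) ∈ triangle T) :
    ‖Vop n Q w ξ η‖ ≤ κ / 4 * Real.exp (L * ξ) := by
  obtain ⟨hξ, hξη, hηT⟩ : 0 ≤ ξ ∧ ξ ≤ η ∧ η ≤ T := hp
  set I := ∫ t, ‖Q (t / 2)‖
  have hshift : ∀ c, ∫ s, ‖Q ((s - c) / 2)‖ = I := integral_sub_right_eq_self (‖Q <| · / 2‖)
  have hg : Integrable fun t => ‖Q (t / 2)‖ := (hQi.comp_div two_ne_zero).norm
  have hI : 0 ≤ I := integral_nonneg fun _ => norm_nonneg _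
  have hL₀ : 0 < L := hI.trans_lt hL
  have hinner : ∀ c ∈ Ioc 0 ξ,
      ‖∫ s in ξ..η, Q ((s - c) / 2) * w c s‖ ≤ I * (κ * Real.exp (L * c)) := by
    intro c hc
    rw [← hshift c, ← MeasureTheory.integral_mul_const]
    refine norm_intervalIntegral_le_integral_of_norm_le ((hg.comp_sub_right c).mul_const _)
      (fun _ => by positivity) fun s hs => (norm_mul_le _ _).trans ?_
    rw [uIoc_of_le hξη] at hs
    exact mul_le_mul_of_nonneg_left (hw c s ⟨hc.1.le, hc.2.trans hs.1.le, hs.2.trans hηT⟩)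
      (norm_nonneg _)
  have houter : ‖∫ c in 0..ξ, ∫ s in ξ..η, Q ((s - c) / 2) * w c s‖ ≤
      I * κ * (Real.exp (L * ξ) / L) := by
    refine (intervalIntegral.norm_integral_le_of_norm_le hξ (Eventually.of_forall hinner)
      ((by fun_prop : Continuous _).intervalIntegrable _ _)).trans ?_
    simp_rw [← mul_assoc, intervalIntegral.integral_const_mul]
    exact mul_le_mul_of_nonneg_left (integral_exp_mul_le_div hL₀) (by positivity)
  have hIL : I * κ * (Real.exp (L * ξ) / L) ≤ κ * Real.exp (L * ξ) := by
    rw [mul_div_assoc', div_le_iff₀ hL₀]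
    nlinarith [mul_le_mul_of_nonneg_right hL.le (mul_nonneg hκ (Real.exp_pos (L * ξ)).le)]
  have hquarter : ‖(1 / 4 : ℂ)‖ = 1 / 4 := by norm_num
  rw [Vop, norm_neg, norm_smul, hquarter]
  linarith

theorem v0fun_congr {q₁ q₂ : ℝ → MatC n} {ξ η : ℝ} (hq : EqOn q₁ q₂ (Icc 0 T))
    (hp : (ξ, η) ∈ triangle T) : v0fun n q₁ ξ η = v0fun n q₂ ξ η := by
  obtain ⟨hξ, hξη, hηT⟩ : 0 ≤ ξ ∧ ξ ≤ η ∧ η ≤ T := hp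
  rw [v0fun, v0fun, integral_congr fun s hs => hq ?_]
  rw [uIcc_of_le (by linarith)] at hs
  constructor <;> linarith [hs.1, hs.2]

theorem Vop_congr {q₁ q₂ : ℝ → MatC n} {w₁ w₂ : ℝ → ℝ → MatC n} {ξ η : ℝ}
    (hq : EqOn q₁ q₂ (Icc 0 T)) (hw : EqOn (uncurry w₁) (uncurry w₂) (triangle T))
    (hp : (ξ, η) ∈ triangle T) : Vop n q₁ w₁ ξ η = Vop n q₂ w₂ ξ η := by
  obtain ⟨hξ, hξη, hηT⟩ : 0 ≤ ξ ∧ ξ ≤ η ∧ η ≤ T := hp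
  refine congrArg (fun x => -((1 / 4 : ℂ) • x)) (integral_congr fun c hc => ?_)
  refine integral_congr fun s hs => ?_
  rw [uIcc_of_le hξ] at hc
  rw [uIcc_of_le hξη] at hs
  have hmem : (c, s) ∈ triangle T := ⟨hc.1, hc.2.trans hs.1, hs.2.trans hηT⟩
  rw [hq ⟨by linarith [hc.2, hs.1], by linarith [hc.1, hs.2]⟩]
  exact congrArg _ (hw hmem)

theorem v0fun_congr_ae {q₁ q₂ : ℝ → MatC n} (hq : q₁ =ᵐ[volume] q₂) :
    v0fun n q₁ = v0fun n q₂ := by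
  ext1 ξ; ext1 η
  rw [v0fun, v0fun, integral_congr_ae (hq.mono fun _ hs _ => hs)]

theorem Vop_congr_ae {q₁ q₂ : ℝ → MatC n} (hq : q₁ =ᵐ[volume] q₂) : Vop n q₁ = Vop n q₂ := by
  ext1 w; ext1 ξ; ext1 η
  refine congrArg (fun x => -((1 / 4 : ℂ) • x)) (integral_congr fun c _ => ?_)
  have hqmp : Measure.QuasiMeasurePreserving (fun s : ℝ => (s - c) / 2) volume volume := by
    have := (Measure.quasiMeasurePreserving_smul volume (inv_ne_zero (two_ne_zero (α := ℝ)))).comp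
      (measurePreserving_sub_right volume c).quasiMeasurePreserving
    convert this using 1
    ext s; simp [div_eq_inv_mul]
  refine integral_congr_ae ((hqmp.ae_eq_comp hq).mono fun s hs _ => ?_)
  simp only [comp_apply] at hs
  rw [hs]

def IsGoursatSolution (n : ℕ) (q : ℝ → MatC n) (T : ℝ) (v : ℝ → ℝ → MatC n) : Prop :=
  ContinuousOn (fun p : ℝ × ℝ => v p.1 p.2) (triangle T) ∧
    ∀ ξ η : ℝ, 0 ≤ ξ → ξ ≤ η → η ≤ T → v ξ η = v0fun n q ξ η + Vop n q v ξ η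

theorem isGoursatSolution_congr {q₁ q₂ : ℝ → MatC n} {v : ℝ → ℝ → MatC n}
    (hq : EqOn q₁ q₂ (Icc 0 T)) : IsGoursatSolution n q₁ T v ↔ IsGoursatSolution n q₂ T v := by
  refine and_congr_right fun _ => forall₄_congr fun ξ η hξ hξη => forall_congr' fun hηT => ?_
  have hp : (ξ, η) ∈ triangle T := ⟨hξ, hξη, hηT⟩
  rw [v0fun_congr hq hp, Vop_congr hq (eqOn_refl _ _) hp]

theorem isGoursatSolution_congr_ae {q₁ q₂ : ℝ → MatC n} {v : ℝ → ℝ → MatC n}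
    (hq : q₁ =ᵐ[volume] q₂) : IsGoursatSolution n q₁ T v ↔ IsGoursatSolution n q₂ T v := by
  rw [IsGoursatSolution, IsGoursatSolution, v0fun_congr_ae hq, Vop_congr_ae hq]

noncomputable def goursatMap (hQm : StronglyMeasurable Q) (hQi : Integrable Q) (hT : 0 ≤ T)
    (u : C(triangle T, MatC n)) : C(triangle T, MatC n) where
  toFun p := v0fun n Q p.1.1 p.1.2 + Vop n Q (curry (extendFromTriangle hT u)) p.1.1 p.1.2
  continuous_toFun := ((continuous_v0fun hQi.locallyIntegrable).add
    (continuous_Vop hQm hQi _)).comp continuous_subtype_val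

theorem goursatMap_apply (hQm : StronglyMeasurable Q) (hQi : Integrable Q) (hT : 0 ≤ T)
    (u : C(triangle T, MatC n)) (p : triangle T) :
    goursatMap hQm hQi hT u p =
      v0fun n Q p.1.1 p.1.2 + Vop n Q (curry (extendFromTriangle hT u)) p.1.1 p.1.2 :=
  rfl

theorem norm_goursatMap_sub_le (hQm : StronglyMeasurable Q) (hQi : Integrable Q) (hT : 0 ≤ T)
    {u u' : C(triangle T, MatC n)} {κ L : ℝ} (hL : ∫ t, ‖Q (t / 2)‖ < L) (hκ : 0 ≤ κ)
    (huu' : ∀ p, ‖u p - u' p‖ ≤ κ * Real.exp (L * p.1.1)) (p : triangle T) :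
    ‖goursatMap hQm hQi hT u p - goursatMap hQm hQi hT u' p‖ ≤ κ / 4 * Real.exp (L * p.1.1) := by
  rw [goursatMap_apply, goursatMap_apply, add_sub_add_left_eq_sub, ← Vop_sub hQm hQi,
    ← extendFromTriangle_sub]
  refine norm_Vop_le_mul_exp hQi hL hκ (fun a b hab => ?_) p.2
  rw [curry_apply, extendFromTriangle_of_mem hT _ hab]
  exact huu' _

theorem dist_goursatMap_iterate_le (hQm : StronglyMeasurable Q) (hQi : Integrable Q)
    (hT : 0 ≤ T) {L : ℝ} (hL : ∫ t, ‖Q (t / 2)‖ < L) (k : ℕ) (u u' : C(triangle T, MatC n)) :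
    dist ((goursatMap hQm hQi hT)^[k] u) ((goursatMap hQm hQi hT)^[k] u') ≤
      Real.exp (L * T) * (1 / 4) ^ k * dist u u' := by
  have hL₀ : 0 ≤ L := (integral_nonneg fun _ => norm_nonneg _).trans hL.le
  have hpointwise : ∀ k (p : triangle T),
      ‖(goursatMap hQm hQi hT)^[k] u p - (goursatMap hQm hQi hT)^[k] u' p‖ ≤
        (1 / 4) ^ k * dist u u' * Real.exp (L * p.1.1) := by
    intro k
    induction k with
    | zero =>
      intro p
      rw [pow_zero, one_mul, ← dist_eq_norm]
      exact (ContinuousMap.dist_apply_le_dist p).trans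
        (le_mul_of_one_le_right dist_nonneg (Real.one_le_exp (mul_nonneg hL₀ p.2.1)))
    | succ k ih =>
      intro p
      rw [iterate_succ_apply', iterate_succ_apply']
      exact (norm_goursatMap_sub_le hQm hQi hT hL (by positivity) ih p).trans_eq (by ring)
  rw [ContinuousMap.dist_le (by positivity)]
  intro p
  rw [dist_eq_norm]
  calc ‖_‖ ≤ (1 / 4) ^ k * dist u u' * Real.exp (L * p.1.1) := hpointwise k p
    _ ≤ (1 / 4) ^ k * dist u u' * Real.exp (L * T) := by
      gcongr
      exact p.2.2.1.trans p.2.2.2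
    _ = Real.exp (L * T) * (1 / 4) ^ k * dist u u' := by ring

theorem isGoursatSolution_of_isFixedPt (hQm : StronglyMeasurable Q) (hQi : Integrable Q)
    (hT : 0 ≤ T) {u : C(triangle T, MatC n)} (hu : IsFixedPt (goursatMap hQm hQi hT) u) :
    IsGoursatSolution n Q T (curry (extendFromTriangle hT u)) := by
  refine ⟨(extendFromTriangle hT u).continuous.continuousOn, fun ξ η hξ hξη hηT => ?_⟩
  have hp : (ξ, η) ∈ triangle T := ⟨hξ, hξη, hηT⟩
  rw [curry_apply, extendFromTriangle_of_mem hT u hp]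
  exact (DFunLike.congr_fun hu _).symm

theorem isFixedPt_restrictToTriangle (hQm : StronglyMeasurable Q) (hQi : Integrable Q)
    (hT : 0 ≤ T) {v : ℝ → ℝ → MatC n} (hv : IsGoursatSolution n Q T v) :
    IsFixedPt (goursatMap hQm hQi hT) (restrictToTriangle hv.1) := by
  refine ContinuousMap.ext fun ⟨p, hp⟩ => ?_
  have hext : EqOn (uncurry (curry (extendFromTriangle hT (restrictToTriangle hv.1))))
      (uncurry v) (triangle T) := fun p' hp' => by
    rw [uncurry_curry, extendFromTriangle_of_mem hT _ hp']
    rfl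
  rw [goursatMap_apply, Vop_congr (eqOn_refl _ _) hext hp]
  exact (hv.2 p.1 p.2 hp.1 hp.2.1 hp.2.2).symm

theorem exists_isGoursatSolution_eqOn (hQm : StronglyMeasurable Q) (hQi : Integrable Q)
    (hT : 0 ≤ T) :
    ∃ v, IsGoursatSolution n Q T v ∧
      ∀ v', IsGoursatSolution n Q T v' → EqOn (uncurry v') (uncurry v) (triangle T) := by
  obtain ⟨u, hu, hu_unique⟩ := existsUnique_isFixedPt_of_dist_iterate_le
    (f := goursatMap hQm hQi hT) (r := 1 / 4) (by norm_num)
    (by norm_num) (dist_goursatMap_iterate_le hQm hQi hT (lt_add_one _))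
  refine ⟨_, isGoursatSolution_of_isFixedPt hQm hQi hT hu, fun v' hv' p hp => ?_⟩
  rw [uncurry_curry, extendFromTriangle_of_mem hT u hp,
    ← hu_unique _ (isFixedPt_restrictToTriangle hQm hQi hT hv')]
  rfl

end Goursat

/-- The Goursat integral equation `v = v₀ + Vv` has a unique continuous
solution on the triangle `{(ξ,η) : 0 ≤ ξ ≤ η ≤ T}` for every `T > 0`. -/
theorem stmt6 (n : ℕ) (q : ℝ → MatC n)
    (hq : LocallyIntegrableOn q (Ici (0 : ℝ))) (T : ℝ) (hT : 0 < T) :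
    ∃ v : ℝ → ℝ → MatC n,
      (ContinuousOn (fun p : ℝ × ℝ => v p.1 p.2)
          {p : ℝ × ℝ | 0 ≤ p.1 ∧ p.1 ≤ p.2 ∧ p.2 ≤ T}) ∧
      (∀ ξ η : ℝ, 0 ≤ ξ → ξ ≤ η → η ≤ T →
          v ξ η = v0fun n q ξ η + Vop n q v ξ η) ∧
      (∀ v' : ℝ → ℝ → MatC n,
        ContinuousOn (fun p : ℝ × ℝ => v' p.1 p.2)
            {p : ℝ × ℝ | 0 ≤ p.1 ∧ p.1 ≤ p.2 ∧ p.2 ≤ T} →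
        (∀ ξ η : ℝ, 0 ≤ ξ → ξ ≤ η → η ≤ T →
            v' ξ η = v0fun n q ξ η + Vop n q v' ξ η) →
        ∀ ξ η : ℝ, 0 ≤ ξ → ξ ≤ η → η ≤ T → v' ξ η = v ξ η) := by
  have hqT : Integrable ((Icc 0 T).indicator q) :=
    (integrable_indicator_iff (f := q) (measurableSet_Icc (a := (0 : ℝ)) (b := T))).2
      (hq.integrableOn_compact_subset (fun _ hx => hx.1) isCompact_Icc)
  obtain ⟨Q, hQm, hqQ⟩ : ∃ Q, StronglyMeasurable Q ∧ (Icc 0 T).indicator q =ᵐ[volume] Q :=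
    ⟨_, hqT.aestronglyMeasurable.stronglyMeasurable_mk, hqT.aestronglyMeasurable.ae_eq_mk⟩
  have hsol : ∀ v, IsGoursatSolution n q T v ↔ IsGoursatSolution n Q T v := fun v =>
    (isGoursatSolution_congr (eqOn_indicator (f := q)).symm).trans (isGoursatSolution_congr_ae hqQ)
  obtain ⟨v, hv, hv_unique⟩ := exists_isGoursatSolution_eqOn hQm (hqT.congr hqQ) hT.le
  obtain ⟨hv_cont, hv_eq⟩ := (hsol v).2 hv
  exact ⟨v, hv_cont, hv_eq, fun v' hv'_cont hv'_eq ξ η hξ hξη hηT =>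
    hv_unique v' ((hsol v').1 ⟨hv'_cont, hv'_eq⟩) (show (ξ, η) ∈ triangle T from ⟨hξ, hξη, hηT⟩)⟩
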